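/- Let U be a finite semigroup, S a subsemigroup, x ∈ S with x' ∈ U satisfying x x' x = x, and y ∈ U. Then y R^S x if and only if: y R^U x, L_y^U and L_x^U lie in the same strongly connected component of the right action of S on L^U-classes, and for some (equivalently any) v ∈ S^1 with L_y^U · v = L_x^U, the map on L_x^U induced by x'yv lies in the group S_{L_x^U}. -/

import Mathlib

variable {U : Type*}

/-- Green's R-relation relative to a set `T` of multipliers (`T = S` gives `R^S`,
`T = Set.univ` gives `R^U`): `x R y` iff `x ∈ y T^1` and `y ∈ x T^1`. -/
def GreenR [Mul U] (T : Set U) (x y : U) : Prop :=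
  (x = y ∨ ∃ a ∈ T, x * a = y) ∧ (y = x ∨ ∃ a ∈ T, y * a = x)

/-- Green's L-relation relative to a set `T` of multipliers. -/
def GreenL [Mul U] (T : Set U) (x y : U) : Prop :=
  (x = y ∨ ∃ a ∈ T, a * x = y) ∧ (y = x ∨ ∃ a ∈ T, a * y = x)

/-- Green's H-relation relative to `T`. -/
def GreenH [Mul U] (T : Set U) (x y : U) : Prop :=
  GreenL T x y ∧ GreenR T x y

/-- Green's D-relation relative to `T` (for finite semigroups, `D = R ∘ L`). -/
def GreenD [Mul U] (T : Set U) (x y : U) : Prop :=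
  ∃ z, GreenR T x z ∧ GreenL T z y

/-- The `L^U`-class of `x` in the ambient semigroup `U`. -/
def Lcl [Mul U] (x : U) : Set U := {y | GreenL Set.univ x y}

/-- The `R^U`-class of `x` in the ambient semigroup `U`. -/
def RclU [Mul U] (x : U) : Set U := {y | GreenR Set.univ x y}

/-- The `R`-class of `x` relative to multipliers from `T`. -/
def Rcl [Mul U] (T : Set U) (x : U) : Set U := {y | GreenR T x y}

/-- `L_a^U` reaches `L_b^U` under the right action of `T^1` on `L^U`-classes
given by `L_a · s = L_{a s}`. -/
def reachC [Mul U] (T : Set U) (a b : U) : Prop :=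
  Lcl a = Lcl b ∨ ∃ s ∈ T, Lcl (a * s) = Lcl b

/-- `R_a^U` reaches `R_b^U` under the left action of `T^1` on `R^U`-classes. -/
def reachCL [Mul U] (T : Set U) (a b : U) : Prop :=
  RclU a = RclU b ∨ ∃ s ∈ T, RclU (s * a) = RclU b

/-- The right action of `S^1` (identity adjoined, encoded as `Option ↥S`) on `U`. -/
def act1 [Mul U] (S : Subsemigroup U) (u : U) (o : Option ↥S) : U :=
  o.elim u (fun s => u * (s : U))

/-- The left action of `S^1` on `U`. -/
def act1L [Mul U] (S : Subsemigroup U) (o : Option ↥S) (u : U) : U :=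
  o.elim u (fun s => (s : U) * u)

/-- The stabiliser `Stab_S(L_x^U)` of the `L^U`-class of `x` under the right
action of `S^1` on subsets of `U`. -/
def StabOfL [Mul U] (S : Subsemigroup U) (x : U) : Set (Option ↥S) :=
  {o | (fun y => act1 S y o) '' Lcl x = Lcl x}

/-- The stabiliser `Stab_S(R_x^U)` of the `R^U`-class of `x` under the left
action of `S^1` on subsets of `U`. -/
def StabOfR [Mul U] (S : Subsemigroup U) (x : U) : Set (Option ↥S) :=
  {o | (fun y => act1L S o y) '' RclU x = RclU x}

/-!
Finite semigroups are stable: if `L_a · t = L_a` then `a t R a`, the way back coming from an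
idempotent of the subsemigroup generated by `t`. Hence every `o ∈ S^1` with `L_a · o = L_a`
permutes `L_a`. As `x' x` fixes `L_x` pointwise, for `y = x w` the map `x' y v` on `L_x` is the
action of `w v`. Conversely, if `x' y v` acts on `L_x` as `o`, evaluating at `x` (and using
`y ∈ x U^1`) gives `x o = y v`; stability leads from `y v` back to `x`, so `x ∈ y S^1`, and
stability once more, with `L_x · u = L_y`, gives `y ∈ x S^1`.
-/

section Semigroup

variable [Semigroup U]

lemma exists_idempotent_mem [Finite U] (T : Subsemigroup U) (hT : (T : Set U).Nonempty) :
    ∃ e ∈ T, e * e = e :=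
  letI : TopologicalSpace U := ⊥
  haveI : DiscreteTopology U := ⟨rfl⟩
  exists_idempotent_in_compact_subsemigroup (fun _ => continuous_of_discreteTopology) (T : Set U) hT
    (Set.toFinite _).isCompact fun _ ha _ hb => T.mul_mem ha hb

lemma eq_or_exists_mul_of_mem_closure_singleton {t s : U}
    (hs : s ∈ Subsemigroup.closure {t}) :
    s = t ∨ ∃ r ∈ Subsemigroup.closure {t}, s = t * r := by
  induction hs using Subsemigroup.closure_induction with
  | mem s hs => exact Or.inl hs
  | mul s r _ hr ihs _ =>
    right
    rcases ihs with rfl | ⟨q, hq, rfl⟩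
    · exact ⟨r, hr, rfl⟩
    · exact ⟨q * r, Subsemigroup.mul_mem _ hq hr, mul_assoc _ _ _⟩

lemma GreenR.mono {T T' : Set U} (hT : T ⊆ T') {a b : U} (h : GreenR T a b) : GreenR T' a b :=
  ⟨h.1.imp_right fun ⟨s, hs, e⟩ => ⟨s, hT hs, e⟩, h.2.imp_right fun ⟨s, hs, e⟩ => ⟨s, hT hs, e⟩⟩

lemma mem_Lcl_self (a : U) : a ∈ Lcl a := ⟨Or.inl rfl, Or.inl rfl⟩

lemma mul_mem_Lcl_mul {a z : U} (hz : z ∈ Lcl a) (t : U) : z * t ∈ Lcl (a * t) :=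
  ⟨hz.1.imp (congrArg (· * t)) fun ⟨p, _, e⟩ => ⟨p, trivial, by rw [← mul_assoc, e]⟩,
    hz.2.imp (congrArg (· * t)) fun ⟨p, _, e⟩ => ⟨p, trivial, by rw [← mul_assoc, e]⟩⟩

lemma mul_eq_self_of_mem_Lcl {a w z : U} (ha : a * w = a) (hz : z ∈ Lcl a) : z * w = z := by
  rcases hz.1 with rfl | ⟨p, -, rfl⟩
  · exact ha
  · rw [mul_assoc, ha]

/-- Stability: `a` is fixed by an idempotent `e` of `⟨t⟩`, and `e` is `t` or `t r` with
`r ∈ ⟨t⟩ ≤ S`. -/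
lemma mul_eq_or_exists_mul_mul_eq_of_Lcl_mul_eq [Finite U] {S : Subsemigroup U} {t : U}
    (ht : t ∈ S) {a : U} (h : Lcl (a * t) = Lcl a) : a * t = a ∨ ∃ r ∈ S, a * t * r = a := by
  rcases (h ▸ mem_Lcl_self a : a ∈ Lcl (a * t)).1 with hat | ⟨p, -, hp⟩
  · exact Or.inl hat
  let W : Subsemigroup U :=
    { carrier := {s | ∃ q, q * (a * s) = a}
      mul_mem' := fun {s₁ s₂} ⟨q₁, h₁⟩ ⟨q₂, h₂⟩ =>
        ⟨q₂ * q₁, by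
          rw [show q₂ * q₁ * (a * (s₁ * s₂)) = q₂ * (q₁ * (a * s₁) * s₂) by
            simp only [mul_assoc], h₁, h₂]⟩ }
  have hCW : Subsemigroup.closure {t} ≤ W :=
    Subsemigroup.closure_le.2 (Set.singleton_subset_iff.2 ⟨p, hp⟩)
  obtain ⟨e, heC, hee⟩ :=
    exists_idempotent_mem (Subsemigroup.closure {t}) ⟨t, Subsemigroup.subset_closure rfl⟩
  have hae : a * e = a := by
    obtain ⟨q, hq⟩ := hCW heC
    calc a * e = q * (a * e) * e := by rw [hq]
      _ = a := by rw [mul_assoc, mul_assoc, hee, hq]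
  have hCS : Subsemigroup.closure {t} ≤ S := Subsemigroup.closure_le.2 (by simpa using ht)
  rcases eq_or_exists_mul_of_mem_closure_singleton heC with rfl | ⟨r, hr, rfl⟩
  · exact Or.inl hae
  · exact Or.inr ⟨r, hCS hr, by rw [mul_assoc, hae]⟩

section Act

variable (S : Subsemigroup U)

/-- `Option.merge (· * ·)` is the product of `S^1` in the `Option` encoding. -/
lemma act1_act1 (u : U) (o₁ o₂ : Option S) :
    act1 S (act1 S u o₁) o₂ = act1 S u (o₁.merge (· * ·) o₂) := by
  cases o₁ <;> cases o₂ <;> simp [act1, Option.merge, mul_assoc]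

lemma mul_act1 (u b : U) (o : Option S) : u * act1 S b o = act1 S (u * b) o := by
  cases o <;> simp [act1, mul_assoc]

lemma exists_act1_iff (P : U → Prop) (a : U) :
    (∃ o : Option S, P (act1 S a o)) ↔ P a ∨ ∃ s ∈ S, P (a * s) := by
  simp [Option.exists, act1]

lemma greenR_iff_exists_act1 (a b : U) :
    GreenR (S : Set U) a b ↔ (∃ o, act1 S a o = b) ∧ ∃ o, act1 S b o = a := by
  simp only [GreenR, exists_act1_iff S (· = b) a, exists_act1_iff S (· = a) b, SetLike.mem_coe]

lemma reachC_iff_exists_act1 (a b : U) :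
    reachC (S : Set U) a b ↔ ∃ o, Lcl (act1 S a o) = Lcl b := by
  simp only [reachC, exists_act1_iff S (fun c => Lcl c = Lcl b) a, SetLike.mem_coe]

variable {S}

lemma act1_mem_Lcl_act1 {a z : U} (hz : z ∈ Lcl a) (o : Option S) :
    act1 S z o ∈ Lcl (act1 S a o) := by
  cases o
  · exact hz
  · exact mul_mem_Lcl_mul hz _

lemma act1_eq_self_of_mem_Lcl {a z : U} {o : Option S} (ha : act1 S a o = a) (hz : z ∈ Lcl a) :
    act1 S z o = z := by
  cases o
  · rfl
  · exact mul_eq_self_of_mem_Lcl ha hz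

variable [Finite U]

lemma exists_act1_act1_eq_of_Lcl_act1_eq {a : U} {o : Option S} (h : Lcl (act1 S a o) = Lcl a) :
    ∃ o', act1 S (act1 S a o) o' = a := by
  cases o with
  | none => exact ⟨none, rfl⟩
  | some t =>
    rcases mul_eq_or_exists_mul_mul_eq_of_Lcl_mul_eq t.2 h with hat | ⟨r, hr, hatr⟩
    · exact ⟨none, hat⟩
    · exact ⟨some ⟨r, hr⟩, hatr⟩

/-- If `L_a · o = L_a` then `o` acts injectively on the finite set `L_a`, as `o o'` fixes it
pointwise for the `o'` with `a o o' = a`; hence it acts bijectively. -/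
lemma mem_StabOfL_of_Lcl_act1_eq {a : U} {o : Option S} (h : Lcl (act1 S a o) = Lcl a) :
    o ∈ StabOfL S a := by
  obtain ⟨o', ho'⟩ := exists_act1_act1_eq_of_Lcl_act1_eq h
  rw [act1_act1] at ho'
  have hmaps : Set.MapsTo (fun z => act1 S z o) (Lcl a) (Lcl a) :=
    fun z hz => h ▸ act1_mem_Lcl_act1 hz o
  have hinj : Set.InjOn (fun z => act1 S z o) (Lcl a) := fun z hz z' hz' hzz' => by
    dsimp only at hzz'
    rw [← act1_eq_self_of_mem_Lcl ho' hz, ← act1_eq_self_of_mem_Lcl ho' hz', ← act1_act1,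
      ← act1_act1, hzz']
  exact (((Set.toFinite _).injOn_iff_bijOn_of_mapsTo hmaps).1 hinj).image_eq

lemma exists_act1_eq_of_Lcl_act1_eq {a b : U} {w u : Option S} (hw : act1 S a w = b)
    (hu : Lcl (act1 S b u) = Lcl a) : ∃ o, act1 S b o = a := by
  rw [← hw, act1_act1] at hu
  obtain ⟨o', ho'⟩ := exists_act1_act1_eq_of_Lcl_act1_eq hu
  exact ⟨u.merge (· * ·) o', by rw [← act1_act1, ← hw, act1_act1 S a w u, ho']⟩

end Act

end Semigroup

theorem rclass_membership_general [Semigroup U] [Finite U] (S : Subsemigroup U)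
    (x : U) (x' : U) (hx' : x * x' * x = x) (y : U) :
    GreenR (S : Set U) y x ↔
      (GreenR (Set.univ : Set U) y x ∧
       (reachC (S : Set U) y x ∧ reachC (S : Set U) x y) ∧
       ∀ v : Option ↥S, Lcl (act1 S y v) = Lcl x →
         ∃ o ∈ StabOfL S x, ∀ z ∈ Lcl x, z * (x' * act1 S y v) = act1 S z o) := by
  have hxx'x : x * (x' * x) = x := by rw [← mul_assoc, hx']
  constructor
  · intro hR
    obtain ⟨⟨w₁, hw₁⟩, ⟨w, hw⟩⟩ := (greenR_iff_exists_act1 S y x).1 hR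
    refine ⟨hR.mono (Set.subset_univ _), ⟨(reachC_iff_exists_act1 S y x).2 ⟨w₁, by rw [hw₁]⟩,
      (reachC_iff_exists_act1 S x y).2 ⟨w, by rw [hw]⟩⟩, fun v hv => ?_⟩
    rw [← hw, act1_act1] at hv ⊢
    refine ⟨_, mem_StabOfL_of_Lcl_act1_eq hv, fun z hz => ?_⟩
    rw [mul_act1, mul_act1, mul_eq_self_of_mem_Lcl hxx'x hz]
  · rintro ⟨hRU, ⟨hyx, hxy⟩, hstab⟩
    obtain ⟨v, hv⟩ := (reachC_iff_exists_act1 S y x).1 hyx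
    obtain ⟨o, -, hoz⟩ := hstab v hv
    have hxx'y : x * (x' * y) = y := by
      rcases hRU.2 with rfl | ⟨d, -, rfl⟩
      · exact hxx'x
      · rw [← mul_assoc x', ← mul_assoc, hxx'x]
    have hxo : act1 S x o = act1 S y v := by
      rw [← hoz x (mem_Lcl_self x), mul_act1, mul_act1, hxx'y]
    obtain ⟨o', ho'⟩ := exists_act1_act1_eq_of_Lcl_act1_eq (hxo ▸ hv)
    rw [hxo, act1_act1] at ho'
    obtain ⟨u, hu⟩ := (reachC_iff_exists_act1 S x y).1 hxy
    exact (greenR_iff_exists_act1 S y x).2 ⟨⟨_, ho'⟩, exists_act1_eq_of_Lcl_act1_eq ho' hu⟩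

/-- Membership test for `R^S`-classes: if `x ∈ S` and `x' ∈ U` satisfies
`x x' x = x`, then for any `y ∈ U` we have `y R^S x` if and only if `y R^U x`,
`L_y^U` and `L_x^U` lie in the same strongly connected component of the right
action of `S` on `L^U`-classes, and for any `v ∈ S^1` with `L_y^U · v = L_x^U`
the map induced on `L_x^U` by `x' y v` lies in the group `S_{L_x^U}` of maps
induced by `Stab_S(L_x^U)`. -/
theorem rclass_membership [Semigroup U] [Finite U] (S : Subsemigroup U)
    (x : U) (hx : x ∈ S) (x' : U) (hx' : x * x' * x = x) (y : U) :
    GreenR (S : Set U) y x ↔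
      (GreenR (Set.univ : Set U) y x ∧
       (reachC (S : Set U) y x ∧ reachC (S : Set U) x y) ∧
       ∀ v : Option ↥S, Lcl (act1 S y v) = Lcl x →
         ∃ o ∈ StabOfL S x, ∀ z ∈ Lcl x, z * (x' * act1 S y v) = act1 S z o) :=
  rclass_membership_general S x x' hx' y
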